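/- arXiv:2410.03969 — 10 statements merged into one kernel-verified Lean document; each statement's English description precedes it below -/
import Mathlib

section
/- For each b ≥ 1, the map (x, α) ↦ φ_α^(b)(x) is jointly concave on the region {(x, α) : α > 0, 0 ≤ x ≤ α}: for θ ∈ (0,1), θ φ_{α₁}^(b)(x₁) + (1−θ) φ_{α₂}^(b)(x₂) ≤ φ_{θα₁+(1−θ)α₂}^(b)(θx₁ + (1−θ)x₂). -/
private lemma sq_div_add (a b c d : ℝ) (hc : 0 < c) (hd : 0 < d) :
    (a + b) ^ 2 / (c + d) ≤ a ^ 2 / c + b ^ 2 / d := by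
  rw [div_add_div _ _ hc.ne' hd.ne', div_le_div_iff₀ (by positivity) (by positivity)]
  nlinarith [sq_nonneg (a * d - b * c), mul_pos hc hd]

private lemma phi_step (x₁ x₂ α₁ α₂ θ : ℝ) (hα₁ : 0 < α₁) (hα₂ : 0 < α₂)
    (hθ0 : 0 < θ) (hθ1 : θ < 1) :
    θ * (x₁ - x₁ ^ 2 / α₁) + (1 - θ) * (x₂ - x₂ ^ 2 / α₂)
      ≤ (θ * x₁ + (1 - θ) * x₂) - (θ * x₁ + (1 - θ) * x₂) ^ 2 / (θ * α₁ + (1 - θ) * α₂) := by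
  have h1 : 0 < 1 - θ := by linarith
  have key := sq_div_add (θ * x₁) ((1 - θ) * x₂) (θ * α₁) ((1 - θ) * α₂)
    (by positivity) (by positivity)
  have e1 : (θ * x₁) ^ 2 / (θ * α₁) = θ * (x₁ ^ 2 / α₁) := by
    field_simp
  have e2 : ((1 - θ) * x₂) ^ 2 / ((1 - θ) * α₂) = (1 - θ) * (x₂ ^ 2 / α₂) := by
    field_simp
  rw [e1, e2] at key
  linarith

private lemma phi_nonneg {α x : ℝ} (hα : 0 < α) (h0 : 0 ≤ x) (h1 : x ≤ α) :
    0 ≤ x - x ^ 2 / α := by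
  rw [sub_nonneg, div_le_iff₀ hα]
  nlinarith

private lemma phi_le_quarter {α x : ℝ} (hα : 0 < α) : x - x ^ 2 / α ≤ α / 4 := by
  rw [sub_le_iff_le_add, ← sub_le_iff_le_add', le_div_iff₀ hα]
  nlinarith [sq_nonneg (α - 2 * x)]

private lemma phi_mono {α u v : ℝ} (hα : 0 < α) (h0 : 0 ≤ u) (huv : u ≤ v)
    (hv : v ≤ α / 2) : u - u ^ 2 / α ≤ v - v ^ 2 / α := by
  nlinarith [div_mul_cancel₀ (u ^ 2) hα.ne', div_mul_cancel₀ (v ^ 2) hα.ne',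
    mul_nonneg (sub_nonneg.2 huv) (by linarith : (0:ℝ) ≤ α - u - v)]

private lemma iter_mem {α : ℝ} (hα : 0 < α) {x : ℝ} (h0 : 0 ≤ x) (h1 : x ≤ α) :
    ∀ b, 0 ≤ (fun y : ℝ => y - y ^ 2 / α)^[b] x ∧ (fun y : ℝ => y - y ^ 2 / α)^[b] x ≤ α := by
  intro b
  induction b with
  | zero => exact ⟨h0, h1⟩
  | succ n ih =>
    rw [Function.iterate_succ_apply']
    exact ⟨phi_nonneg hα ih.1 ih.2, le_trans (phi_le_quarter hα) (by linarith)⟩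

private lemma iter_quarter {α : ℝ} (hα : 0 < α) {x : ℝ} (h0 : 0 ≤ x) (h1 : x ≤ α)
    {b : ℕ} (hb : 1 ≤ b) : (fun y : ℝ => y - y ^ 2 / α)^[b] x ≤ α / 4 := by
  obtain ⟨m, rfl⟩ := Nat.exists_eq_add_of_le hb
  rw [add_comm, Function.iterate_succ_apply']
  exact phi_le_quarter hα

theorem phi_iterate_jointly_concave (b : ℕ) (hb : 1 ≤ b)
    (x₁ x₂ α₁ α₂ θ : ℝ) (hα₁ : 0 < α₁) (hα₂ : 0 < α₂)
    (hx₁0 : 0 ≤ x₁) (hx₁ : x₁ ≤ α₁) (hx₂0 : 0 ≤ x₂) (hx₂ : x₂ ≤ α₂)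
    (hθ0 : 0 < θ) (hθ1 : θ < 1) :
    θ * (fun y : ℝ => y - y ^ 2 / α₁)^[b] x₁
      + (1 - θ) * (fun y : ℝ => y - y ^ 2 / α₂)^[b] x₂
    ≤ (fun y : ℝ => y - y ^ 2 / (θ * α₁ + (1 - θ) * α₂))^[b]
        (θ * x₁ + (1 - θ) * x₂) := by
  have h1θ : 0 < 1 - θ := by linarith
  have hᾱ : 0 < θ * α₁ + (1 - θ) * α₂ := by positivity
  have hxb0 : 0 ≤ θ * x₁ + (1 - θ) * x₂ := by positivity
  have hxb : θ * x₁ + (1 - θ) * x₂ ≤ θ * α₁ + (1 - θ) * α₂ := by nlinarith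
  induction b, hb using Nat.le_induction with
  | base =>
    simpa using phi_step x₁ x₂ α₁ α₂ θ hα₁ hα₂ hθ0 hθ1
  | succ n hn ih =>
    rw [Function.iterate_succ_apply', Function.iterate_succ_apply',
      Function.iterate_succ_apply']
    set u₁ := (fun y : ℝ => y - y ^ 2 / α₁)^[n] x₁ with hu₁
    set u₂ := (fun y : ℝ => y - y ^ 2 / α₂)^[n] x₂ with hu₂
    set v := (fun y : ℝ => y - y ^ 2 / (θ * α₁ + (1 - θ) * α₂))^[n]
        (θ * x₁ + (1 - θ) * x₂) with hv
    have hu₁m := iter_mem hα₁ hx₁0 hx₁ n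
    have hu₂m := iter_mem hα₂ hx₂0 hx₂ n
    have hvq : v ≤ (θ * α₁ + (1 - θ) * α₂) / 4 := iter_quarter hᾱ hxb0 hxb hn
    have hu₁q : u₁ ≤ α₁ / 4 := iter_quarter hα₁ hx₁0 hx₁ hn
    have hu₂q : u₂ ≤ α₂ / 4 := iter_quarter hα₂ hx₂0 hx₂ hn
    calc θ * (u₁ - u₁ ^ 2 / α₁) + (1 - θ) * (u₂ - u₂ ^ 2 / α₂)
        ≤ (θ * u₁ + (1 - θ) * u₂)
            - (θ * u₁ + (1 - θ) * u₂) ^ 2 / (θ * α₁ + (1 - θ) * α₂) :=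
          phi_step u₁ u₂ α₁ α₂ θ hα₁ hα₂ hθ0 hθ1
      _ ≤ v - v ^ 2 / (θ * α₁ + (1 - θ) * α₂) := by
          apply phi_mono hᾱ (add_nonneg (mul_nonneg hθ0.le hu₁m.1) (mul_nonneg h1θ.le hu₂m.1)) ih
          linarith
end

section
/- For α > 0, b ≥ 1, and x ∈ (0, α], the b-fold composition satisfies the upper bound φ_α^(b)(x) ≤ 1 / (b/α + 1/x). -/
private lemma phi_aux (α : ℝ) (hα : 0 < α) (b : ℕ) :
    ∀ x : ℝ, 0 ≤ x → x ≤ α →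
    (fun y : ℝ => y - y ^ 2 / α)^[b] x ≤ 1 / ((b : ℝ) / α + 1 / x) := by
  induction b with
  | zero =>
    intro x hx0 hxα
    simp only [Function.iterate_zero, id_eq, Nat.cast_zero, zero_div, zero_add]
    rcases eq_or_lt_of_le hx0 with h | h
    · simp [← h]
    · rw [one_div_one_div]
  | succ b ih =>
    intro x hx0 hxα
    rw [Function.iterate_succ_apply]
    have hdiv : x ^ 2 / α ≤ x := by
      rw [div_le_iff₀ hα]; nlinarith
    have hy0 : 0 ≤ x - x ^ 2 / α := by linarith
    have hyα : x - x ^ 2 / α ≤ α := by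
      have : 0 ≤ x ^ 2 / α := by positivity
      linarith
    have hrhs0 : 0 ≤ 1 / (((b : ℝ) + 1) / α + 1 / x) := by positivity
    rcases eq_or_lt_of_le hy0 with h0 | h0
    · -- the image is 0 : iterate stays 0
      have hfix := Function.iterate_fixed (f := fun y : ℝ => y - y ^ 2 / α)
        (x := (0 : ℝ)) (by norm_num) b
      rw [← h0, hfix]
      push_cast
      exact hrhs0
    · -- image > 0, hence x > 0
      have hx0' : 0 < x := by
        rcases eq_or_lt_of_le hx0 with h | h
        · exfalso; rw [← h] at h0; norm_num at h0
        · exact h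
      have h1 := ih (x - x ^ 2 / α) hy0 hyα
      refine h1.trans ?_
      have key : ((b : ℝ) + 1) / α + 1 / x ≤ (b : ℝ) / α + 1 / (x - x ^ 2 / α) := by
        have h2 : 1 / α + 1 / x ≤ 1 / (x - x ^ 2 / α) := by
          rw [div_add_div _ _ (ne_of_gt hα) (ne_of_gt hx0'),
            div_le_div_iff₀ (by positivity) h0]
          have h3 : 0 ≤ x ^ 3 / α := by positivity
          have hid : (1 * x + α * 1) * (x - x ^ 2 / α) = 1 * (α * x) - x ^ 3 / α := by
            field_simp; ring
          linarith
        have he : ((b : ℝ) + 1) / α = (b : ℝ) / α + 1 / α := by ring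
        rw [he]; linarith
      have hpos : 0 < ((b : ℝ) + 1) / α + 1 / x := by positivity
      push_cast
      exact one_div_le_one_div_of_le hpos key

theorem phi_iterate_upper_bound (α : ℝ) (hα : 0 < α) (b : ℕ) (hb : 1 ≤ b)
    (x : ℝ) (hx0 : 0 < x) (hxα : x ≤ α) :
    (fun y : ℝ => y - y ^ 2 / α)^[b] x ≤ 1 / ((b : ℝ) / α + 1 / x) :=
  phi_aux α hα b x hx0.le hxα
end

section
/- The map Φ₁(A) = A − A²/tr(A) is concave on the cone of positive semidefinite matrices with positive trace: for psd A₁, A₂ with positive traces and θ ∈ (0,1), θ Φ₁(A₁) + (1−θ) Φ₁(A₂) ⪯ Φ₁(θA₁ + (1−θ)A₂) in the Loewner order. -/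
open ComplexOrder

noncomputable def Phi1 {N : ℕ} (A : Matrix (Fin N) (Fin N) ℂ) : Matrix (Fin N) (Fin N) ℂ :=
  A - (Matrix.trace A)⁻¹ • A ^ 2

theorem Phi1_concave {N : ℕ} (A₁ A₂ : Matrix (Fin N) (Fin N) ℂ)
    (hA₁ : A₁.PosSemidef) (hA₂ : A₂.PosSemidef)
    (ht₁ : 0 < (Matrix.trace A₁).re) (ht₂ : 0 < (Matrix.trace A₂).re)
    (θ : ℝ) (hθ0 : 0 < θ) (hθ1 : θ < 1) :
    (Phi1 ((θ : ℂ) • A₁ + ((1 : ℂ) - θ) • A₂)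
      - ((θ : ℂ) • Phi1 A₁ + ((1 : ℂ) - θ) • Phi1 A₂)).PosSemidef := by
  set r₁ : ℝ := (Matrix.trace A₁).re with hr₁
  set r₂ : ℝ := (Matrix.trace A₂).re with hr₂
  -- traces are real
  have htr₁ : Matrix.trace A₁ = (r₁ : ℂ) := by
    have h : star (Matrix.trace A₁) = Matrix.trace A₁ := by
      conv_rhs => rw [← hA₁.1]
      rw [Matrix.trace_conjTranspose]
    simpa [hr₁] using (Complex.conj_eq_iff_re.mp h).symm
  have htr₂ : Matrix.trace A₂ = (r₂ : ℂ) := by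
    have h : star (Matrix.trace A₂) = Matrix.trace A₂ := by
      conv_rhs => rw [← hA₂.1]
      rw [Matrix.trace_conjTranspose]
    simpa [hr₂] using (Complex.conj_eq_iff_re.mp h).symm
  set r : ℝ := θ * r₁ + (1 - θ) * r₂ with hr
  have hθ1' : 0 < 1 - θ := by linarith
  have hrpos : 0 < r := by have := mul_pos hθ0 ht₁; have := mul_pos hθ1' ht₂; rw [hr]; linarith
  set c : ℝ := (θ * (1 - θ)) / (r * r₁ * r₂) with hc
  have hcpos : 0 < c := by positivity
  set M : Matrix (Fin N) (Fin N) ℂ := (r₂ : ℂ) • A₁ - (r₁ : ℂ) • A₂ with hM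
  have hMherm : M.IsHermitian := by
    unfold Matrix.IsHermitian
    rw [hM, Matrix.conjTranspose_sub, Matrix.conjTranspose_smul, Matrix.conjTranspose_smul,
      hA₁.1, hA₂.1]
    simp [Complex.conj_ofReal]
  have htrX : Matrix.trace ((θ : ℂ) • A₁ + ((1 : ℂ) - θ) • A₂) = (r : ℂ) := by
    rw [Matrix.trace_add, Matrix.trace_smul, Matrix.trace_smul, htr₁, htr₂, hr]
    simp only [smul_eq_mul]
    push_cast
    ring
  have key : (Phi1 ((θ : ℂ) • A₁ + ((1 : ℂ) - θ) • A₂)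
      - ((θ : ℂ) • Phi1 A₁ + ((1 : ℂ) - θ) • Phi1 A₂))
      = ((Real.sqrt c : ℂ) • M).conjTranspose * ((Real.sqrt c : ℂ) • M) := by
    rw [Matrix.conjTranspose_smul, hMherm.eq]
    have hsq : star ((Real.sqrt c : ℂ)) * (Real.sqrt c : ℂ) = (c : ℂ) := by
      rw [Complex.star_def, Complex.conj_ofReal, ← Complex.ofReal_mul, Real.mul_self_sqrt hcpos.le]
    rw [Matrix.smul_mul, Matrix.mul_smul, smul_smul, hsq]
    unfold Phi1
    rw [htrX, htr₁, htr₂, hM]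
    have h1 : ((r₁:ℝ):ℂ) ≠ 0 := by exact_mod_cast ne_of_gt (by exact_mod_cast ht₁)
    have h2 : ((r₂:ℝ):ℂ) ≠ 0 := by exact_mod_cast ne_of_gt (by exact_mod_cast ht₂)
    have h3 : ((r:ℝ):ℂ) ≠ 0 := by exact_mod_cast ne_of_gt hrpos
    simp only [pow_two, Matrix.add_mul, Matrix.mul_add, Matrix.sub_mul, Matrix.mul_sub,
      Matrix.smul_mul, Matrix.mul_smul, smul_smul, smul_sub, smul_add]
    push_cast [hr] at h3
    have h4 : ((θ:ℂ) * r₁ - θ * r₂ + r₂) ≠ 0 := by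
      rw [show ((θ:ℂ) * r₁ - θ * r₂ + r₂) = θ * r₁ + (1 - θ) * r₂ by ring]
      exact h3
    have h5 : (-((θ:ℂ) * r₁ * r₂ ^ 2) + θ * r₁ ^ 2 * r₂ + r₁ * r₂ ^ 2) ≠ 0 := by
      rw [show (-((θ:ℂ) * r₁ * r₂ ^ 2) + θ * r₁ ^ 2 * r₂ + r₁ * r₂ ^ 2)
          = r₁ * r₂ * (θ * r₁ - θ * r₂ + r₂) by ring]
      exact mul_ne_zero (mul_ne_zero h1 h2) h4
    clear_value r₁ r₂ r c
    match_scalars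
    any_goals (push_cast [hc, hr]; ring1)
    all_goals (push_cast [hc, hr]; field_simp [h1, h2, h3, h4, h5])
    all_goals ring
  rw [key]
  exact Matrix.posSemidef_conjTranspose_mul_self _
end

section
/- The concavity gap of Φ₁ admits the explicit formula: for psd A₁, A₂ with positive traces and θ ∈ (0,1), Φ₁(θA₁+(1−θ)A₂) − θΦ₁(A₁) − (1−θ)Φ₁(A₂) = [θ(1−θ) tr(A₁) tr(A₂) / (θ tr(A₁) + (1−θ) tr(A₂))] · (A₁/tr(A₁) − A₂/tr(A₂))², which is psd. -/
open ComplexOrder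

/-! Since the trace is linear, the gap is a quadratic expression in `A₁, A₂` in which the linear
terms cancel; with `t = θ tr A₁ + (1-θ) tr A₂`, the coefficient of `A₁²` is
`θ/tr A₁ - θ²/t = θ(1-θ) tr A₂ / (tr A₁ · t)`, and similarly for `A₂²` and `A₁A₂ + A₂A₁`, which
matches the expansion of the square. The scalar factor is a positive real and the square of a
Hermitian matrix is positive semidefinite. -/

theorem smul_add_smul_sub_inv_smul_sq_gap {K R : Type*} [Field K] [Ring R] [Algebra K R]
    (x y : R) {a b p q : K} (hp : p ≠ 0) (hq : q ≠ 0) (hpq : a * p + b * q ≠ 0) :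
    (a • x + b • y) - (a * p + b * q)⁻¹ • (a • x + b • y) ^ 2
        - a • (x - p⁻¹ • x ^ 2) - b • (y - q⁻¹ • y ^ 2)
      = (a * b * p * q / (a * p + b * q)) • (p⁻¹ • x - q⁻¹ • y) ^ 2 := by
  simp only [sq, add_mul, mul_add, sub_mul, mul_sub, smul_mul_smul_comm, smul_sub, smul_add,
    smul_smul]
  match_scalars <;> field_simp <;> ring

theorem Phi1_smul_add_smul_sub {N : ℕ} (A₁ A₂ : Matrix (Fin N) (Fin N) ℂ) {a b : ℂ}
    (h₁ : A₁.trace ≠ 0) (h₂ : A₂.trace ≠ 0) (h : a * A₁.trace + b * A₂.trace ≠ 0) :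
    Phi1 (a • A₁ + b • A₂) - a • Phi1 A₁ - b • Phi1 A₂
      = (a * b * A₁.trace * A₂.trace / (a * A₁.trace + b * A₂.trace))
          • (A₁.trace⁻¹ • A₁ - A₂.trace⁻¹ • A₂) ^ 2 := by
  rw [Phi1, Phi1, Phi1, Matrix.trace_add, Matrix.trace_smul, Matrix.trace_smul, smul_eq_mul,
    smul_eq_mul]
  exact smul_add_smul_sub_inv_smul_sq_gap A₁ A₂ h₁ h₂ h

theorem Matrix.IsHermitian.posSemidef_sq {n R : Type*} [Fintype n] [DecidableEq n] [CommRing R]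
    [PartialOrder R] [StarRing R] [StarOrderedRing R] {A : Matrix n n R} (hA : A.IsHermitian) :
    (A ^ 2).PosSemidef := by
  simpa only [hA.eq, ← sq] using Matrix.posSemidef_conjTranspose_mul_self A

theorem Matrix.PosSemidef.trace_pos {n : Type*} [Fintype n] {A : Matrix n n ℂ}
    (hA : A.PosSemidef) (h : 0 < A.trace.re) : 0 < A.trace :=
  Complex.lt_def.2 ⟨h, (Complex.nonneg_iff.1 hA.trace_nonneg).2⟩

theorem Phi1_concavity_gap {N : ℕ} (A₁ A₂ : Matrix (Fin N) (Fin N) ℂ)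
    (hA₁ : A₁.PosSemidef) (hA₂ : A₂.PosSemidef)
    (ht₁ : 0 < (Matrix.trace A₁).re) (ht₂ : 0 < (Matrix.trace A₂).re)
    (θ : ℝ) (hθ0 : 0 < θ) (hθ1 : θ < 1) :
    Phi1 ((θ : ℂ) • A₁ + ((1 : ℂ) - θ) • A₂)
        - (θ : ℂ) • Phi1 A₁ - ((1 : ℂ) - θ) • Phi1 A₂
      = ((θ : ℂ) * (1 - θ) * Matrix.trace A₁ * Matrix.trace A₂
          / ((θ : ℂ) * Matrix.trace A₁ + (1 - θ) * Matrix.trace A₂))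
          • ((Matrix.trace A₁)⁻¹ • A₁ - (Matrix.trace A₂)⁻¹ • A₂) ^ 2
    ∧ (Phi1 ((θ : ℂ) • A₁ + ((1 : ℂ) - θ) • A₂)
        - (θ : ℂ) • Phi1 A₁ - ((1 : ℂ) - θ) • Phi1 A₂).PosSemidef := by
  have hτ₁ := hA₁.trace_pos ht₁
  have hτ₂ := hA₂.trace_pos ht₂
  have hθ : (0 : ℂ) < θ := by exact_mod_cast hθ0
  have hθ' : (0 : ℂ) < 1 - θ := sub_pos.2 (by exact_mod_cast hθ1)
  have hden : 0 < (θ : ℂ) * A₁.trace + (1 - θ) * A₂.trace := by positivity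
  have hgap := Phi1_smul_add_smul_sub A₁ A₂ hτ₁.ne' hτ₂.ne' hden.ne'
  refine ⟨hgap, hgap ▸ Matrix.PosSemidef.smul ?_ (div_nonneg (by positivity) hden.le)⟩
  exact Matrix.IsHermitian.posSemidef_sq <|
    (hA₁.smul (inv_nonneg.2 hτ₁.le)).isHermitian.sub (hA₂.smul (inv_nonneg.2 hτ₂.le)).isHermitian
end

section
/- The map Φ_b^(t) (the t-fold composition of Φ_b, where Φ_b(M) = φ_{tr M}^(b)(M)) is non-decreasing on diagonal psd matrices: if Λ₁ ⪯ Λ₂ are diagonal psd matrices (with positive traces), then Φ_b^(t)(Λ₁) ⪯ Φ_b^(t)(Λ₂). -/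
/-!
On a diagonal matrix, `Φ_b` acts entrywise on the diagonal `d` by iterating the scalar map
`φ_α(x) = x - x²/α` with `α = ∑ d` fixed. Enlarging `d` to `d'` raises both an entry `x` and the
remaining mass `α - x`, and `φ_α(x) = x (α - x) / α` increases with both, so the first step is
monotone. Its values are at most `α/4` and `α'/4`, inside the interval `x ≤ α'/2` where `φ_{α'}` is
increasing, and `φ_α ≤ φ_{α'}` for `α ≤ α'`; hence monotonicity persists through the remaining
`b - 1` steps and then through all `t` outer iterations.
-/

open ComplexOrder

noncomputable def PhiB {N : ℕ} (b : ℕ) (M : Matrix (Fin N) (Fin N) ℂ) :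
    Matrix (Fin N) (Fin N) ℂ :=
  (fun X : Matrix (Fin N) (Fin N) ℂ => X - (Matrix.trace M)⁻¹ • X ^ 2)^[b] M

open Set Function Matrix

noncomputable def phiStep (α x : ℝ) : ℝ := x - α⁻¹ * x ^ 2

section phiStep

variable {α α' x x' y y' : ℝ}

lemma phiStep_zero_right (α : ℝ) : phiStep α 0 = 0 := by simp [phiStep]

lemma phiStep_le_quarter (hα : 0 < α) (x : ℝ) : phiStep α x ≤ α / 4 := by
  have h : α / 4 - phiStep α x = α⁻¹ * (x - α / 2) ^ 2 := by
    unfold phiStep; field_simp; ring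
  have hsq : 0 ≤ α⁻¹ * (x - α / 2) ^ 2 := by positivity
  linarith

lemma mapsTo_phiStep_Icc (α : ℝ) : MapsTo (phiStep α) (Icc 0 α) (Icc 0 α) := by
  rintro x ⟨hx, hxα⟩
  rcases (hx.trans hxα).eq_or_lt with rfl | hα
  · obtain rfl : x = 0 := le_antisymm hxα hx
    simp [phiStep_zero_right]
  · have h : phiStep α x = α⁻¹ * (x * (α - x)) := by
      unfold phiStep; field_simp
    have hαx := sub_nonneg.2 hxα
    exact ⟨by rw [h]; positivity, (phiStep_le_quarter hα x).trans (by linarith)⟩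

lemma phiStep_mono_left (hα : 0 < α) (hαα' : α ≤ α') (x : ℝ) : phiStep α x ≤ phiStep α' x := by
  unfold phiStep
  gcongr

lemma phiStep_monotoneOn (hα : 0 ≤ α) : MonotoneOn (phiStep α) (Iic (α / 2)) := by
  intro x hx x' hx' hxx'
  rw [mem_Iic] at hx hx'
  have hsum : α⁻¹ * (x + x') ≤ 1 :=
    (mul_le_mul_of_nonneg_left (by linarith) (inv_nonneg.2 hα)).trans inv_mul_le_one
  have h : phiStep α x' - phiStep α x = (x' - x) * (1 - α⁻¹ * (x + x')) := by
    unfold phiStep; ring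
  rw [← sub_nonneg, h]
  exact mul_nonneg (sub_nonneg.2 hxx') (sub_nonneg.2 hsum)

/-- With `s = α - x` one has `phiStep α x = x * s / (x + s)`, increasing in `x` and in `s`;
the hypotheses say that `x` and `s` both grow. -/
lemma phiStep_le_phiStep_of_sub_le (hα : 0 < α) (hxx' : x ≤ x') (hgap : x' - x ≤ α' - α) :
    phiStep α x ≤ phiStep α' x' := by
  have hα' : 0 < α' := by linarith
  have hp := sub_nonneg.2 hxx'
  have hr : 0 ≤ α' - α - (x' - x) := by linarith
  have key : (α' * x' - x' ^ 2) * α - (α * x - x ^ 2) * α'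
      = (α' - α - (x' - x)) * x ^ 2 + (x' - x) * (α - x) ^ 2
        + (x' - x) * (α' - α - (x' - x)) * α := by ring
  have e : ∀ a y : ℝ, 0 < a → phiStep a y = (a * y - y ^ 2) / a := fun a y ha => by
    unfold phiStep; field_simp
  rw [e α x hα, e α' x' hα', div_le_div_iff₀ hα hα', ← sub_nonneg, key]
  positivity

lemma phiStep_iterate_le_of_le_half (hα : 0 < α) (hαα' : α ≤ α') (hy : y ∈ Icc 0 α)
    (hyy' : y ≤ y') (hy' : y' ≤ α' / 2) (m : ℕ) : (phiStep α)^[m] y ≤ (phiStep α')^[m] y' := by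
  induction m generalizing y y' with
  | zero => exact hyy'
  | succ m ih =>
    have hα' : 0 < α' := hα.trans_le hαα'
    rw [iterate_succ_apply, iterate_succ_apply]
    refine ih (mapsTo_phiStep_Icc α hy) ?_ ((phiStep_le_quarter hα' y').trans (by linarith))
    calc phiStep α y ≤ phiStep α' y := phiStep_mono_left hα hαα' y
      _ ≤ phiStep α' y' := phiStep_monotoneOn hα'.le (hyy'.trans hy') hy' hyy'

theorem phiStep_iterate_le_iterate (hx : x ∈ Icc 0 α) (hxx' : x ≤ x') (hgap : x' - x ≤ α' - α) :
    ∀ b : ℕ, (phiStep α)^[b] x ≤ (phiStep α')^[b] x'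
  | 0 => hxx'
  | b + 1 => by
    obtain ⟨hx₀, hxα⟩ := hx
    have hx' : x' ∈ Icc 0 α' := ⟨hx₀.trans hxx', by linarith⟩
    rw [iterate_succ_apply, iterate_succ_apply]
    rcases (hx₀.trans hxα).eq_or_lt with rfl | hα
    · obtain rfl : x = 0 := le_antisymm hxα hx₀
      rw [phiStep_zero_right, iterate_fixed (phiStep_zero_right 0)]
      exact ((mapsTo_phiStep_Icc α').iterate b (mapsTo_phiStep_Icc α' hx')).1
    · have hα' : 0 < α' := by linarith
      exact phiStep_iterate_le_of_le_half hα (by linarith) (mapsTo_phiStep_Icc α ⟨hx₀, hxα⟩)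
        (phiStep_le_phiStep_of_sub_le hα hxx' hgap)
        ((phiStep_le_quarter hα' x').trans (by linarith)) b

end phiStep

theorem MonotoneOn.iterate_of_mapsTo {β : Type*} [Preorder β] {f : β → β} {s : Set β}
    (hf : MonotoneOn f s) (hs : MapsTo f s s) (n : ℕ) : MonotoneOn f^[n] s := by
  induction n with
  | zero => exact monotoneOn_id
  | succ n ih => rw [iterate_succ']; exact hf.comp ih (hs.iterate n)

section phiVec

variable {ι : Type*} [Fintype ι]

noncomputable def phiVec (b : ℕ) (d : ι → ℝ) : ι → ℝ :=
  fun i => (phiStep (∑ j, d j))^[b] (d i)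

lemma mem_Icc_zero_sum {d : ι → ℝ} (hd : 0 ≤ d) (i : ι) : d i ∈ Icc 0 (∑ j, d j) :=
  ⟨hd i, Finset.single_le_sum (fun j _ => hd j) (Finset.mem_univ i)⟩

lemma mapsTo_phiVec (b : ℕ) : MapsTo (phiVec (ι := ι) b) (Ici 0) (Ici 0) :=
  fun _ hd i => ((mapsTo_phiStep_Icc _).iterate b (mem_Icc_zero_sum hd i)).1

lemma monotoneOn_phiVec (b : ℕ) : MonotoneOn (phiVec (ι := ι) b) (Ici 0) := by
  intro d hd d' _ hdd' i
  refine phiStep_iterate_le_iterate (mem_Icc_zero_sum hd i) (hdd' i) ?_ b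
  rw [← Finset.sum_sub_distrib]
  exact Finset.single_le_sum (f := d' - d) (fun j _ => sub_nonneg.2 (hdd' j)) (Finset.mem_univ i)

end phiVec

section diagonal

variable {n : Type*} [DecidableEq n]

lemma semiconj_diagonal_ofReal_phiStep [Fintype n] (α : ℝ) :
    Semiconj (fun d : n → ℝ => diagonal fun i => (d i : ℂ)) (Pi.map fun _ => phiStep α)
      (fun X => X - (α : ℂ)⁻¹ • X ^ 2) := by
  intro d
  simp only [sq, diagonal_mul_diagonal, ← diagonal_smul, diagonal_sub, Pi.map, phiStep]
  congr 1
  ext i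
  push_cast
  simp [smul_eq_mul]

lemma Matrix.IsDiag.exists_eq_diagonal_ofReal {A : Matrix n n ℂ} (hd : A.IsDiag)
    (hA : A.IsHermitian) : ∃ d : n → ℝ, A = diagonal fun i => (d i : ℂ) :=
  ⟨fun i => (A i i).re,
    by simpa using ((congrArg diagonal hA.coe_re_diag).trans hd.diagonal_diag).symm⟩

lemma posSemidef_diagonal_ofReal_iff {d : n → ℝ} :
    (diagonal fun i => (d i : ℂ)).PosSemidef ↔ 0 ≤ d := by
  simp [posSemidef_diagonal_iff, Pi.le_def]

lemma posSemidef_diagonal_ofReal_sub_iff {d d' : n → ℝ} :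
    (diagonal (fun i => (d' i : ℂ)) - diagonal fun i => (d i : ℂ)).PosSemidef ↔ d ≤ d' := by
  rw [diagonal_sub, posSemidef_diagonal_iff]
  simp [Pi.le_def, ← Complex.ofReal_sub]

end diagonal

lemma semiconj_diagonal_ofReal_PhiB {N : ℕ} (b : ℕ) :
    Semiconj (fun d : Fin N → ℝ => diagonal fun i => (d i : ℂ)) (phiVec b) (PhiB b) := by
  intro d
  simp only [PhiB, trace_diagonal, ← Complex.ofReal_sum]
  rw [← (semiconj_diagonal_ofReal_phiStep _).iterate_right b d, Pi.map_iterate]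
  rfl

theorem PhiB_iter_monotone_general {N : ℕ} (b t : ℕ)
    (Λ₁ Λ₂ : Matrix (Fin N) (Fin N) ℂ)
    (hd₁ : Λ₁.IsDiag) (hd₂ : Λ₂.IsDiag)
    (h₁ : Λ₁.PosSemidef) (h₂ : Λ₂.PosSemidef)
    (hle : (Λ₂ - Λ₁).PosSemidef) :
    ((PhiB b)^[t] Λ₂ - (PhiB b)^[t] Λ₁).PosSemidef := by
  obtain ⟨d₁, rfl⟩ := hd₁.exists_eq_diagonal_ofReal h₁.isHermitian
  obtain ⟨d₂, rfl⟩ := hd₂.exists_eq_diagonal_ofReal h₂.isHermitian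
  rw [posSemidef_diagonal_ofReal_iff] at h₁
  rw [posSemidef_diagonal_ofReal_sub_iff] at hle
  rw [← (semiconj_diagonal_ofReal_PhiB b).iterate_right t d₁,
    ← (semiconj_diagonal_ofReal_PhiB b).iterate_right t d₂, posSemidef_diagonal_ofReal_sub_iff]
  exact (monotoneOn_phiVec b).iterate_of_mapsTo (mapsTo_phiVec b) t h₁ (h₁.trans hle) hle

theorem PhiB_iter_monotone {N : ℕ} (b t : ℕ) (hb : 1 ≤ b) (ht : 1 ≤ t)
    (Λ₁ Λ₂ : Matrix (Fin N) (Fin N) ℂ)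
    (hd₁ : Λ₁.IsDiag) (hd₂ : Λ₂.IsDiag)
    (h₁ : Λ₁.PosSemidef) (h₂ : Λ₂.PosSemidef)
    (ht₁ : 0 < (Matrix.trace Λ₁).re) (ht₂ : 0 < (Matrix.trace Λ₂).re)
    (hle : (Λ₂ - Λ₁).PosSemidef) :
    ((PhiB b)^[t] Λ₂ - (PhiB b)^[t] Λ₁).PosSemidef :=
  PhiB_iter_monotone_general b t Λ₁ Λ₂ hd₁ hd₂ h₁ h₂ hle
end

section
/- The map Φ_b^(t) is concave on diagonal psd matrices: for diagonal psd Λ₁, Λ₂ with positive traces and θ ∈ (0,1), θ Φ_b^(t)(Λ₁) + (1−θ) Φ_b^(t)(Λ₂) ⪯ Φ_b^(t)(θΛ₁ + (1−θ)Λ₂). -/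
/-!
On diagonal psd matrices `Φ_b` acts entrywise: with `s` the trace, each diagonal entry `x`
is sent to `φ_s^[b] x`. The map `(s, x) ↦ (s, φ_s x)` is concave on `0 ≤ x ≤ s` (as `x² / s` is
jointly convex), sends this wedge into `0 ≤ 2x ≤ s`, and is monotone there. A concave map
composed with a concave monotone one is concave, so `(s, x) ↦ φ_s^[b] x` is jointly concave for
`b ≥ 1`, and hence so is `v ↦ Φ_b (diag v)`. The latter is also monotone, because raising one
entry raises the trace at least as much; so all its iterates are concave too.
-/

open ComplexOrder

open Set

theorem MonotoneOn.iterate {α : Type*} [Preorder α] {f : α → α} {s : Set α}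
    (hf : MonotoneOn f s) (hs : MapsTo f s s) (n : ℕ) : MonotoneOn f^[n] s := by
  induction n with
  | zero => exact monotoneOn_id
  | succ n ih => exact (Function.iterate_succ f n) ▸ ih.comp hf hs

section ConcaveIterate

variable {𝕜 E F β : Type*} [Semiring 𝕜] [PartialOrder 𝕜]
  [AddCommMonoid E] [SMul 𝕜 E] [AddCommMonoid F] [PartialOrder F] [SMul 𝕜 F]
  [AddCommMonoid β] [PartialOrder β] [SMul 𝕜 β]

theorem ConcaveOn.comp_of_mapsTo {s : Set E} {t : Set F} {f : E → F} {g : F → β}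
    (hg : ConcaveOn 𝕜 t g) (hg' : MonotoneOn g t) (hf : ConcaveOn 𝕜 s f)
    (hst : MapsTo f s t) : ConcaveOn 𝕜 s (g ∘ f) :=
  ⟨hf.1, fun _ hx _ hy _ _ ha hb hab =>
    (hg.2 (hst hx) (hst hy) ha hb hab).trans <|
      hg' (hg.1 (hst hx) (hst hy) ha hb hab) (hst (hf.1 hx hy ha hb hab))
        (hf.2 hx hy ha hb hab)⟩

theorem ConcaveOn.iterate {f : F → F} {s : Set F} (hf : ConcaveOn 𝕜 s f)
    (hf' : MonotoneOn f s) (hs : MapsTo f s s) (n : ℕ) : ConcaveOn 𝕜 s f^[n] := by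
  induction n with
  | zero => exact ⟨hf.1, fun _ _ _ _ _ _ _ _ _ => le_rfl⟩
  | succ n ih => exact (Function.iterate_succ' f n) ▸ hf.comp_of_mapsTo hf' ih (hs.iterate n)

end ConcaveIterate

noncomputable def phi (α x : ℝ) : ℝ := x - x ^ 2 / α

noncomputable def phiPair (p : ℝ × ℝ) : ℝ × ℝ := (p.1, phi p.1 p.2)

/-- It contains `(0, 0)`, where `phi 0 0 = 0` by `0 / 0 = 0`; this point is needed, as zero
diagonals occur along the iteration, e.g. `Φ_b (diag (s, 0, …, 0)) = 0`. -/
def wedge (c : ℝ) : Set (ℝ × ℝ) := {p | 0 ≤ p.2 ∧ c * p.2 ≤ p.1}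

theorem convex_wedge (c : ℝ) : Convex ℝ (wedge c) := by
  rintro p ⟨hp₀, hp⟩ q ⟨hq₀, hq⟩ a b ha hb -
  constructor <;>
    simp only [Prod.fst_add, Prod.snd_add, Prod.smul_fst, Prod.smul_snd, smul_eq_mul]
  · positivity
  · nlinarith

theorem wedge_two_subset_wedge_one : wedge 2 ⊆ wedge 1 :=
  fun _ ⟨h₀, h⟩ => ⟨h₀, by linarith⟩

theorem phi_eq_mul_div {s x : ℝ} (h : s = 0 → x = 0) : phi s x = x * (s - x) / s := by
  rcases eq_or_ne s 0 with rfl | hs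
  · simp [phi, h rfl]
  · rw [phi]
    field_simp

theorem mapsTo_phiPair : MapsTo phiPair (wedge 1) (wedge 2) := by
  rintro ⟨s, x⟩ ⟨hx, hxs⟩
  simp only [one_mul] at hxs
  have hs : 0 ≤ s := hx.trans hxs
  refine ⟨?_, ?_⟩ <;> dsimp only [phiPair] <;> rw [phi_eq_mul_div (fun h => by linarith)]
  · exact div_nonneg (mul_nonneg hx (by linarith)) hs
  · rw [← mul_div_assoc]
    exact div_le_of_le_mul₀ hs hs (by nlinarith [sq_nonneg (s - 2 * x)])

theorem mapsTo_phiPair_wedge_one : MapsTo phiPair (wedge 1) (wedge 1) :=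
  mapsTo_phiPair.mono_right wedge_two_subset_wedge_one

theorem mapsTo_phiPair_wedge_two : MapsTo phiPair (wedge 2) (wedge 2) :=
  mapsTo_phiPair.mono_left wedge_two_subset_wedge_one

/-- `x² / s` is the supremum of the affine functions `2λx - λ²s`, attained at `λ = x / s`. -/
theorem convexOn_sq_div : ConvexOn ℝ (wedge 1) (fun p : ℝ × ℝ => p.2 ^ 2 / p.1) := by
  have tangent_le : ∀ (l : ℝ), ∀ p ∈ wedge 1, 2 * l * p.2 - l ^ 2 * p.1 ≤ p.2 ^ 2 / p.1 := by
    rintro l ⟨s, x⟩ ⟨hx, hxs⟩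
    dsimp only at hx hxs ⊢
    rcases (hx.trans (one_mul x ▸ hxs)).eq_or_lt with rfl | hs
    · simp [le_antisymm (one_mul x ▸ hxs) hx]
    · rw [le_div_iff₀ hs]
      nlinarith [sq_nonneg (x - l * s)]
  have tangent_eq : ∀ p ∈ wedge 1,
      p.2 ^ 2 / p.1 = 2 * (p.2 / p.1) * p.2 - (p.2 / p.1) ^ 2 * p.1 := by
    rintro ⟨s, x⟩ ⟨hx, hxs⟩
    dsimp only at hx hxs ⊢
    rcases eq_or_ne s 0 with rfl | hs
    · simp [le_antisymm (one_mul x ▸ hxs) hx]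
    · field_simp
      ring
  refine ⟨convex_wedge 1, fun p hp q hq a b ha hb hab => ?_⟩
  have hm := tangent_eq _ (convex_wedge 1 hp hq ha hb hab)
  simp only [Prod.fst_add, Prod.snd_add, Prod.smul_fst, Prod.smul_snd, smul_eq_mul] at hm ⊢
  rw [hm]
  set l := (a * p.2 + b * q.2) / (a * p.1 + b * q.1)
  linear_combination a * tangent_le l p hp + b * tangent_le l q hq

theorem concaveOn_phiPair : ConcaveOn ℝ (wedge 1) phiPair := by
  have hphi : ConcaveOn ℝ (wedge 1) (fun p : ℝ × ℝ => phi p.1 p.2) :=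
    ((LinearMap.snd ℝ ℝ ℝ).concaveOn (convex_wedge 1)).sub convexOn_sq_div
  refine ⟨convex_wedge 1, fun p hp q hq a b ha hb hab => ⟨le_rfl, hphi.2 hp hq ha hb hab⟩⟩

theorem monotoneOn_phiPair : MonotoneOn phiPair (wedge 2) := by
  rintro ⟨s, x⟩ ⟨hx, hxs⟩ ⟨s', x'⟩ ⟨hx', hxs'⟩ ⟨hss : s ≤ s', hxx : x ≤ x'⟩
  refine ⟨hss, ?_⟩
  dsimp only [phiPair] at hx hxs hx' hxs' ⊢
  rw [phi_eq_mul_div (fun h => by linarith), phi_eq_mul_div (fun h => by linarith)]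
  rcases (hx.trans (by linarith : x ≤ s)).eq_or_lt with rfl | hs
  · rw [div_zero]
    exact div_nonneg (mul_nonneg hx' (by linarith)) (by linarith)
  · rw [div_le_div_iff₀ hs (by linarith)]
    nlinarith [mul_nonneg hs.le
        (mul_nonneg (sub_nonneg.2 hxx) (by linarith : 0 ≤ s' - x - x')),
      mul_nonneg (sub_nonneg.2 hss) (sq_nonneg x)]

theorem phiPair_le_phiPair {p q : ℝ × ℝ} (hp : p ∈ wedge 1) (hpq : p.2 ≤ q.2)
    (hgap : q.2 - p.2 ≤ q.1 - p.1) : phiPair p ≤ phiPair q := by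
  obtain ⟨s, x⟩ := p
  obtain ⟨s', x'⟩ := q
  obtain ⟨hx, hxs⟩ := hp
  dsimp only [phiPair] at hx hxs hpq hgap ⊢
  refine ⟨by linarith, ?_⟩
  rw [phi_eq_mul_div (fun h => by linarith), phi_eq_mul_div (fun h => by linarith)]
  rcases (hx.trans (by linarith : x ≤ s)).eq_or_lt with rfl | hs
  · rw [div_zero]
    exact div_nonneg (mul_nonneg (by linarith) (by linarith)) (by linarith)
  · rw [div_le_div_iff₀ hs (by linarith)]
    nlinarith [mul_nonneg (sub_nonneg.2 hpq) (sq_nonneg (s - x)),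
      mul_nonneg (by linarith : 0 ≤ s' - s - (x' - x))
        (by nlinarith : 0 ≤ (x' - x) * s + x ^ 2)]

theorem phiPair_iterate (n : ℕ) (p : ℝ × ℝ) :
    phiPair^[n] p = (p.1, (phi p.1)^[n] p.2) := by
  induction n with
  | zero => rfl
  | succ n ih => rw [Function.iterate_succ_apply', ih, Function.iterate_succ_apply']; rfl

theorem concaveOn_phi_iterate {b : ℕ} (hb : 1 ≤ b) :
    ConcaveOn ℝ (wedge 1) (fun p : ℝ × ℝ => (phi p.1)^[b] p.2) := by
  obtain ⟨k, rfl⟩ := Nat.exists_eq_add_of_le' hb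
  have hk : ConcaveOn ℝ (wedge 2) phiPair^[k] :=
    (concaveOn_phiPair.subset wedge_two_subset_wedge_one (convex_wedge 2)).iterate
      monotoneOn_phiPair mapsTo_phiPair_wedge_two k
  have hk1 : ConcaveOn ℝ (wedge 1) (phiPair^[k] ∘ phiPair) :=
    hk.comp_of_mapsTo (monotoneOn_phiPair.iterate mapsTo_phiPair_wedge_two k)
      concaveOn_phiPair mapsTo_phiPair
  have := ((LinearMap.snd ℝ ℝ ℝ).concaveOn convex_univ).comp_of_mapsTo
    (monotone_snd.monotoneOn _) hk1 (mapsTo_univ _ _)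
  refine this.congr fun p _ => ?_
  simp [← Function.iterate_succ, phiPair_iterate]

section Diagonal

variable {ι : Type*} [Fintype ι]

/-- `Φ_b` on the diagonal matrix with real diagonal `v` (whose trace is `∑ j, v j`). -/
noncomputable def psi (b : ℕ) (v : ι → ℝ) : ι → ℝ := fun i => (phi (∑ j, v j))^[b] (v i)

theorem psi_apply_eq_snd (b : ℕ) (v : ι → ℝ) (i : ι) :
    psi b v i = (phiPair^[b] (∑ j, v j, v i)).2 := by
  rw [phiPair_iterate]
  rfl

theorem sum_apply_mem_wedge {v : ι → ℝ} (hv : 0 ≤ v) (i : ι) : (∑ j, v j, v i) ∈ wedge 1 :=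
  ⟨hv i, by simpa using Finset.single_le_sum (fun j _ => hv j) (Finset.mem_univ i)⟩

theorem mapsTo_psi (b : ℕ) : MapsTo (psi b) (Ici (0 : ι → ℝ)) (Ici 0) := fun v hv i => by
  rw [psi_apply_eq_snd]
  exact (mapsTo_phiPair_wedge_one.iterate b (sum_apply_mem_wedge hv i)).1

theorem concaveOn_psi {b : ℕ} (hb : 1 ≤ b) : ConcaveOn ℝ (Ici (0 : ι → ℝ)) (psi b) := by
  refine ⟨convex_Ici 0, fun v hv w hw a c ha hc hac i => ?_⟩
  have h := (concaveOn_phi_iterate hb).2 (sum_apply_mem_wedge hv i) (sum_apply_mem_wedge hw i)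
    ha hc hac
  simpa [psi, Finset.sum_add_distrib, Finset.mul_sum] using h

theorem monotoneOn_psi {b : ℕ} (hb : 1 ≤ b) : MonotoneOn (psi b) (Ici (0 : ι → ℝ)) := by
  intro v hv w hw hvw i
  obtain ⟨k, rfl⟩ := Nat.exists_eq_add_of_le' hb
  have hgap : w i - v i ≤ ∑ j, w j - ∑ j, v j := by
    rw [← Finset.sum_sub_distrib]
    exact Finset.single_le_sum (f := fun j => w j - v j) (fun j _ => sub_nonneg.2 (hvw j))
      (Finset.mem_univ i)
  have hstep : phiPair (∑ j, v j, v i) ≤ phiPair (∑ j, w j, w i) :=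
    phiPair_le_phiPair (sum_apply_mem_wedge hv i) (hvw i) hgap
  rw [psi_apply_eq_snd, psi_apply_eq_snd, Function.iterate_succ_apply,
    Function.iterate_succ_apply]
  exact (monotoneOn_phiPair.iterate mapsTo_phiPair_wedge_two k
    (mapsTo_phiPair (sum_apply_mem_wedge hv i)) (mapsTo_phiPair (sum_apply_mem_wedge hw i))
    hstep).2

theorem concaveOn_psi_iterate {b : ℕ} (hb : 1 ≤ b) (t : ℕ) :
    ConcaveOn ℝ (Ici (0 : ι → ℝ)) (psi b)^[t] :=
  (concaveOn_psi hb).iterate (monotoneOn_psi hb) (mapsTo_psi b) t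

end Diagonal

section RealDiagonal

variable {ι : Type*} [DecidableEq ι]

def realDiagonal (v : ι → ℝ) : Matrix ι ι ℂ := Matrix.diagonal fun i => (v i : ℂ)

theorem realDiagonal_sub (v w : ι → ℝ) :
    realDiagonal v - realDiagonal w = realDiagonal (v - w) := by
  simp [realDiagonal, Matrix.diagonal_sub]

theorem realDiagonal_convexComb (θ : ℝ) (v w : ι → ℝ) :
    (θ : ℂ) • realDiagonal v + ((1 : ℂ) - θ) • realDiagonal w
      = realDiagonal (θ • v + (1 - θ) • w) := by
  ext i j
  rcases eq_or_ne i j with rfl | h <;> simp [realDiagonal, Matrix.diagonal_apply_ne, *]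

theorem posSemidef_realDiagonal_iff {v : ι → ℝ} : (realDiagonal v).PosSemidef ↔ 0 ≤ v := by
  simp [realDiagonal, Matrix.posSemidef_diagonal_iff, Pi.le_def]

theorem Matrix.IsDiag.exists_eq_realDiagonal {A : Matrix ι ι ℂ} (hd : A.IsDiag)
    (h : A.PosSemidef) : ∃ v : ι → ℝ, 0 ≤ v ∧ A = realDiagonal v := by
  refine ⟨fun i => (A i i).re, fun i => ?_, ?_⟩
  · simpa using (Complex.le_def.1 (h.diag_nonneg (i := i))).1
  · ext i j
    rcases eq_or_ne i j with rfl | hij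
    · simpa [realDiagonal] using
        Complex.eq_re_of_ofReal_le (Complex.ofReal_zero ▸ h.diag_nonneg)
    · simp [realDiagonal, Matrix.diagonal_apply_ne, hd hij, hij]

theorem realDiagonal_phi [Fintype ι] (s : ℝ) (v : ι → ℝ) :
    realDiagonal (fun i => phi s (v i)) = realDiagonal v - (s : ℂ)⁻¹ • realDiagonal v ^ 2 := by
  ext i j
  rcases eq_or_ne i j with rfl | h
  · simp only [realDiagonal, phi, sq, Complex.ofReal_sub, Complex.ofReal_div,
      Complex.ofReal_mul, Matrix.diagonal_apply_eq, Matrix.diagonal_mul_diagonal,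
      Matrix.sub_apply, Matrix.smul_apply, smul_eq_mul, sub_right_inj]
    ring
  · simp [realDiagonal, sq, Matrix.diagonal_apply_ne _ h]

end RealDiagonal

theorem PhiB_realDiagonal {N : ℕ} (b : ℕ) (v : Fin N → ℝ) :
    PhiB b (realDiagonal v) = realDiagonal (psi b v) := by
  have htr : (realDiagonal v).trace = ((∑ j, v j : ℝ) : ℂ) := by
    simp [realDiagonal, Matrix.trace_diagonal]
  have hstep : Function.Semiconj realDiagonal (Pi.map fun _ => phi (∑ j, v j))
      (fun X : Matrix (Fin N) (Fin N) ℂ => X - ((∑ j, v j : ℝ) : ℂ)⁻¹ • X ^ 2) :=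
    realDiagonal_phi _
  rw [PhiB, htr, ← hstep.iterate_right b v, Pi.map_iterate]
  rfl

theorem PhiB_iterate_realDiagonal {N : ℕ} (b t : ℕ) (v : Fin N → ℝ) :
    (PhiB b)^[t] (realDiagonal v) = realDiagonal ((psi b)^[t] v) :=
  (Function.Semiconj.iterate_right (fun v => (PhiB_realDiagonal b v).symm) t v).symm

theorem PhiB_iter_concave_general {N : ℕ} (b t : ℕ) (hb : 1 ≤ b)
    (Λ₁ Λ₂ : Matrix (Fin N) (Fin N) ℂ)
    (hd₁ : Λ₁.IsDiag) (hd₂ : Λ₂.IsDiag)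
    (h₁ : Λ₁.PosSemidef) (h₂ : Λ₂.PosSemidef)
    (θ : ℝ) (hθ0 : 0 < θ) (hθ1 : θ < 1) :
    ((PhiB b)^[t] ((θ : ℂ) • Λ₁ + ((1 : ℂ) - θ) • Λ₂)
      - ((θ : ℂ) • (PhiB b)^[t] Λ₁ + ((1 : ℂ) - θ) • (PhiB b)^[t] Λ₂)).PosSemidef := by
  obtain ⟨v₁, hv₁, rfl⟩ := hd₁.exists_eq_realDiagonal h₁
  obtain ⟨v₂, hv₂, rfl⟩ := hd₂.exists_eq_realDiagonal h₂
  have hconc := (concaveOn_psi_iterate hb t).2 hv₁ hv₂ hθ0.le (sub_nonneg.2 hθ1.le)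
    (add_sub_cancel θ 1)
  rw [realDiagonal_convexComb, PhiB_iterate_realDiagonal, PhiB_iterate_realDiagonal,
    PhiB_iterate_realDiagonal, realDiagonal_convexComb, realDiagonal_sub,
    posSemidef_realDiagonal_iff]
  exact sub_nonneg.2 hconc

theorem PhiB_iter_concave {N : ℕ} (b t : ℕ) (hb : 1 ≤ b) (ht : 1 ≤ t)
    (Λ₁ Λ₂ : Matrix (Fin N) (Fin N) ℂ)
    (hd₁ : Λ₁.IsDiag) (hd₂ : Λ₂.IsDiag)
    (h₁ : Λ₁.PosSemidef) (h₂ : Λ₂.PosSemidef)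
    (ht₁ : 0 < (Matrix.trace Λ₁).re) (ht₂ : 0 < (Matrix.trace Λ₂).re)
    (θ : ℝ) (hθ0 : 0 < θ) (hθ1 : θ < 1) :
    ((PhiB b)^[t] ((θ : ℂ) • Λ₁ + ((1 : ℂ) - θ) • Λ₂)
      - ((θ : ℂ) • (PhiB b)^[t] Λ₁ + ((1 : ℂ) - θ) • (PhiB b)^[t] Λ₂)).PosSemidef :=
  PhiB_iter_concave_general b t hb Λ₁ Λ₂ hd₁ hd₂ h₁ h₂ θ hθ0 hθ1
end

section
/- One expected-residual step of randomly pivoted Cholesky: if A is psd with tr(A) > 0, and the random residual is A' = A − A(:,s)A(s,:)/A(s,s) where the pivot s is drawn with probability A(j,j)/tr(A) (with the convention that the update is zero when A(s,s) = 0), then E[A'] = A − A²/tr(A). -/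
/-!
Weighting the update of pivot `s` by its probability `A(s,s)/tr A` cancels the `1/A(s,s)`, so the
expected update is `(tr A)⁻¹ ∑ₛ A(:,s) A(s,:) = A²/tr A`. The convention at `A(s,s) = 0` is
harmless: a positive semidefinite matrix with a zero diagonal entry has that whole column zero.
-/

open ComplexOrder Matrix

namespace Matrix

theorem sum_of_col_mul_row {R l m n : Type*} [Fintype m] [NonUnitalNonAssocSemiring R]
    (A : Matrix l m R) (B : Matrix m n R) : ∑ s, of (fun i j => A i s * B s j) = A * B := by
  ext i j
  simp only [sum_apply, of_apply, mul_apply]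

variable {𝕜 n : Type*} [RCLike 𝕜] [Fintype n] {A : Matrix n n 𝕜}

theorem PosSemidef.apply_eq_zero_of_diag_eq_zero (hA : A.PosSemidef) {j : n} (hj : A j j = 0)
    (i : n) : A i j = 0 := by
  classical
  have hcol : A *ᵥ Pi.single j 1 = 0 := by
    rw [← hA.dotProduct_mulVec_zero_iff, Pi.star_single, star_one, mulVec_single_one,
      single_one_dotProduct]
    exact hj
  simpa [mulVec_single_one] using congrFun hcol i

abbrev choleskyUpdate [DecidableEq 𝕜] (A : Matrix n n 𝕜) (s : n) : Matrix n n 𝕜 :=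
  if A s s = 0 then 0 else (A s s)⁻¹ • of (fun i j => A i s * A s j)

theorem PosSemidef.diag_smul_choleskyUpdate [DecidableEq 𝕜] (hA : A.PosSemidef) (s : n) :
    A s s • choleskyUpdate A s = of (fun i j => A i s * A s j) := by
  unfold choleskyUpdate
  split_ifs with hs
  · ext i j
    simp [hA.apply_eq_zero_of_diag_eq_zero hs i]
  · rw [smul_smul, mul_inv_cancel₀ hs, one_smul]

end Matrix

theorem rpcholesky_expected_residual {N : ℕ} (A : Matrix (Fin N) (Fin N) ℂ)
    (hA : A.PosSemidef) (htr : 0 < (Matrix.trace A).re) :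
    ∑ s : Fin N, (A s s / Matrix.trace A)
        • (A - (if A s s = 0 then 0
                else (A s s)⁻¹ • Matrix.of (fun i j => A i s * A s j)))
      = A - (Matrix.trace A)⁻¹ • A ^ 2 := by
  have htr0 : A.trace ≠ 0 := fun h => by simp [h] at htr
  have hweights : ∑ s, A s s / A.trace = 1 := by
    rw [← Finset.sum_div]
    exact div_self htr0
  calc _ = ∑ s, ((A s s / A.trace) • A - (A.trace)⁻¹ • of (fun i j => A i s * A s j)) := by
        refine Finset.sum_congr rfl fun s _ => ?_
        simp only [smul_sub, div_eq_inv_mul, mul_smul, hA.diag_smul_choleskyUpdate]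
    _ = (∑ s, A s s / A.trace) • A - (A.trace)⁻¹ • ∑ s, of (fun i j => A i s * A s j) := by
        rw [Finset.sum_sub_distrib, Finset.sum_smul, Finset.smul_sum]
    _ = A - (Matrix.trace A)⁻¹ • A ^ 2 := by
        rw [hweights, one_smul, sum_of_col_mul_row, sq]
end

section
/- Continuous-time convergence bound: let r ≥ 1, b ≥ 1, β > 0, α > 0, η = β/α, and suppose α(t) solves the ODE α'(t) = −b·α(t)²/((b+r)·α(t) + r·β) with initial value α(0) = α. If α ≥ εβ, then α(t) ≤ εβ for all t ≥ ((b+r)/b)·log(1/(εη)) + r/(bε) − (r/b)·η. -/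
theorem continuous_time_convergence_bound (b r β ε a : ℝ)
    (hb : 1 ≤ b) (hr : 1 ≤ r) (hβ : 0 < β) (hε : 0 < ε) (ha : 0 < a)
    (hinit : ε * β ≤ a)
    (α : ℝ → ℝ)
    (hα : ∀ t : ℝ, HasDerivAt α (-(b * α t ^ 2 / ((b + r) * α t + r * β))) t)
    (hα0 : α 0 = a) :
    ∀ t : ℝ,
      (b + r) / b * Real.log (1 / (ε * (β / a))) + r / (b * ε) - r / b * (β / a) ≤ t →
      α t ≤ ε * β := by
  have hb0 : (0:ℝ) < b := lt_of_lt_of_le one_pos hb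
  have hr0 : (0:ℝ) < r := lt_of_lt_of_le one_pos hr
  set c1 : ℝ := (b + r) / b with hc1
  set c2 : ℝ := r * β / b with hc2
  have hc1pos : 0 < c1 := div_pos (by linarith) hb0
  have hc2pos : 0 < c2 := div_pos (mul_pos hr0 hβ) hb0
  set f : ℝ → ℝ := fun x => c1 * Real.log x - c2 / x with hf
  -- strict monotonicity of f on positives
  have hmono : ∀ x y : ℝ, 0 < x → x < y → f x < f y := by
    intro x y hx hxy
    have hy : 0 < y := hx.trans hxy
    have h1 : Real.log x < Real.log y := Real.log_lt_log hx hxy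
    have h2 : c2 / y < c2 / x := div_lt_div_of_pos_left hc2pos hx hxy
    simp only [hf]
    nlinarith
  have hcont : Continuous α := by
    rw [continuous_iff_continuousAt]; exact fun t => (hα t).continuousAt
  -- g := f ∘ α + id has derivative 0 wherever α is positive
  have hg : ∀ t : ℝ, 0 < α t → HasDerivAt (fun s => f (α s) + s) 0 t := by
    intro t ht
    have hne : α t ≠ 0 := ne_of_gt ht
    have hden : 0 < (b + r) * α t + r * β := by positivity
    have h1 : HasDerivAt f (c1 / α t + c2 / (α t) ^ 2) (α t) := by
      have hl : HasDerivAt (fun x => c1 * Real.log x) (c1 * (α t)⁻¹) (α t) :=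
        (Real.hasDerivAt_log hne).const_mul c1
      have hinv : HasDerivAt (fun x : ℝ => c2 / x) (c2 * (-((α t) ^ 2)⁻¹)) (α t) := by
        simpa [div_eq_mul_inv] using (hasDerivAt_inv hne).const_mul c2
      have := hl.sub hinv
      refine this.congr_deriv ?_
      simp only [div_eq_mul_inv]
      ring
    have h2 := (h1.comp t (hα t)).add (hasDerivAt_id t)
    refine h2.congr_deriv ?_
    have h3 : (c1 / α t + c2 / (α t) ^ 2) * (b * α t ^ 2 / ((b + r) * α t + r * β)) = 1 := by
      rw [hc1, hc2]
      field_simp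
    rw [mul_neg, h3]; ring
  -- constant lemma on intervals where α is positive
  have hconst : ∀ t : ℝ, 0 ≤ t → (∀ s, 0 ≤ s → s ≤ t → 0 < α s) →
      f (α t) + t = f a := by
    intro t ht hposs
    have := constant_of_has_deriv_right_zero (f := fun s => f (α s) + s) (a := 0) (b := t)
      (by
        intro u hu
        exact (hg u (hposs u hu.1 hu.2)).continuousAt.continuousWithinAt)
      (by
        intro u hu
        exact ((hg u (hposs u hu.1 (le_of_lt hu.2))).hasDerivWithinAt))
      t (Set.right_mem_Icc.2 ht)
    simpa [hα0] using this
  -- positivity of α on [0, ∞)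
  have hpos : ∀ t : ℝ, 0 ≤ t → 0 < α t := by
    by_contra hcon
    push_neg at hcon
    obtain ⟨t1, ht1, ht1le⟩ := hcon
    -- find a zero of α in [0, t1]
    have hzero : ∃ c ∈ Set.Icc (0:ℝ) t1, α c = 0 := by
      have h0 : (0:ℝ) ∈ Set.Icc (α t1) (α 0) := by
        constructor
        · exact ht1le
        · rw [hα0]; exact le_of_lt ha
      obtain ⟨c, hc, hc0⟩ := intermediate_value_Icc' ht1 hcont.continuousOn h0
      exact ⟨c, hc, hc0⟩
    set Z : Set ℝ := Set.Icc 0 t1 ∩ α ⁻¹' {0} with hZ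
    have hZclosed : IsClosed Z := isClosed_Icc.inter (isClosed_singleton.preimage hcont)
    have hZne : Z.Nonempty := by
      obtain ⟨c, hc, hc0⟩ := hzero
      exact ⟨c, hc, hc0⟩
    have hZbdd : BddBelow Z := ⟨0, fun x hx => hx.1.1⟩
    set t0 : ℝ := sInf Z with ht0
    have ht0mem : t0 ∈ Z := hZclosed.csInf_mem hZne hZbdd
    have ht0nonneg : 0 ≤ t0 := ht0mem.1.1
    have hαt0 : α t0 = 0 := ht0mem.2
    have ht0pos : 0 < t0 := by
      rcases lt_or_eq_of_le ht0nonneg with h | h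
      · exact h
      · exfalso; rw [← h] at hαt0; rw [hα0] at hαt0; linarith
    -- α is positive strictly before t0
    have hbefore : ∀ s, 0 ≤ s → s < t0 → 0 < α s := by
      intro s hs hst
      by_contra hsle
      push_neg at hsle
      rcases lt_or_eq_of_le hsle with hlt | heq
      · have h0 : (0:ℝ) ∈ Set.Icc (α s) (α 0) := ⟨le_of_lt hlt, by rw [hα0]; exact le_of_lt ha⟩
        obtain ⟨c, hc, hc0⟩ := intermediate_value_Icc' hs hcont.continuousOn h0
        have hcZ : c ∈ Z := ⟨⟨hc.1, le_trans hc.2 (le_trans (le_of_lt hst) ht0mem.1.2)⟩, hc0⟩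
        have hle : t0 ≤ c := csInf_le hZbdd hcZ
        have hcs : c ≤ s := hc.2
        linarith
      · have hsZ : s ∈ Z := ⟨⟨hs, le_trans (le_of_lt hst) ht0mem.1.2⟩, heq⟩
        have := csInf_le hZbdd hsZ
        linarith
    -- f (α s) = f a - s before t0
    have hkey : ∀ s, 0 ≤ s → s < t0 → f (α s) = f a - s := by
      intro s hs hst
      have := hconst s hs (fun u hu hus => hbefore u hu (lt_of_le_of_lt hus hst))
      linarith
    -- get s near t0 with α s small
    set δ : ℝ := Real.exp ((f a - t0) / c1) with hδ
    have hδpos : 0 < δ := Real.exp_pos _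
    have hca : ContinuousAt α t0 := hcont.continuousAt
    rw [Metric.continuousAt_iff] at hca
    obtain ⟨d, hd, hball⟩ := hca δ hδpos
    set s : ℝ := max 0 (t0 - d / 2) with hsdef
    have hs0 : 0 ≤ s := le_max_left _ _
    have hst0 : s < t0 := by
      apply max_lt ht0pos
      linarith
    have hdist : dist s t0 < d := by
      rw [Real.dist_eq, abs_of_nonpos (by linarith)]
      have : t0 - d / 2 ≤ s := le_max_right _ _
      linarith
    have hαs : α s < δ := by
      have := hball hdist
      rw [hαt0, dist_zero_right, Real.norm_eq_abs] at this
      exact lt_of_abs_lt this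
    have hαspos : 0 < α s := hbefore s hs0 hst0
    -- contradiction
    have h1 : f (α s) < c1 * Real.log (α s) := by
      simp only [hf]
      have : 0 < c2 / α s := div_pos hc2pos hαspos
      linarith
    have h2 : Real.log (α s) < Real.log δ := Real.log_lt_log hαspos hαs
    have h3 : c1 * Real.log δ = f a - t0 := by
      rw [hδ, Real.log_exp]
      field_simp
    have h4 : f (α s) = f a - s := hkey s hs0 hst0
    nlinarith
  -- the main identity on [0, ∞)
  have hid : ∀ t : ℝ, 0 ≤ t → f (α t) = f a - t := by
    intro t ht
    have := hconst t ht (fun u hu _ => hpos u hu)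
    linarith
  -- conclude
  intro t ht
  have hεβ : 0 < ε * β := mul_pos hε hβ
  have hTeq : (b + r) / b * Real.log (1 / (ε * (β / a))) + r / (b * ε) - r / b * (β / a)
      = f a - f (ε * β) := by
    have h1 : 1 / (ε * (β / a)) = a / (ε * β) := by
      field_simp
    rw [h1, Real.log_div (ne_of_gt ha) (ne_of_gt hεβ)]
    simp only [hf, hc1, hc2]
    field_simp
    ring
  have hfle : f (ε * β) ≤ f a := by
    rcases lt_or_eq_of_le hinit with h | h
    · exact le_of_lt (hmono _ _ hεβ h)
    · rw [h]
  have hT0 : 0 ≤ t := by rw [hTeq] at ht; linarith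
  have := hid t hT0
  by_contra hcon
  push_neg at hcon
  have := hmono _ _ hεβ hcon
  rw [hid t hT0] at this
  rw [hTeq] at ht
  linarith
end

section
/- Discrete-vs-continuous comparison: let b, r ≥ 1 and β ≥ 0, and define the recursion α^{(t+1)} = α^{(t)} − b(α^{(t)})²/((b+r)α^{(t)} + rβ) with α^{(0)} = α > 0. Let α(t) solve α'(t) = −b α(t)²/((b+r)α(t) + rβ) with α(0) = α. Then α^{(t)} ≤ α(t) for every integer t ≥ 0. -/
/-!
With `g x = b x² / ((b + r) x + r β)` one has `0 ≤ g x ≤ x` on `[0, ∞)`, and both `g` and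
`x ↦ x - g x` are monotone there. Comparison with `α 0 * exp (-2 t)` keeps the solution `α`
positive, hence decreasing, so on `[t, t + 1]` its speed `g (α s)` is at most `g (α t)`: one unit
of time moves `α` down by at most one step of the recursion. Monotonicity of `x ↦ x - g x` then
keeps the iterates below `α` by induction.
-/

open Set Real

noncomputable def decayRate (b r β x : ℝ) : ℝ := b * x ^ 2 / ((b + r) * x + r * β)

section decayRate

variable {b r β : ℝ}

@[simp] theorem decayRate_zero : decayRate b r β 0 = 0 := by simp [decayRate]

theorem decayRate_nonneg (hb : 0 ≤ b) (hr : 0 ≤ r) (hβ : 0 ≤ β) {x : ℝ} (hx : 0 ≤ x) :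
    0 ≤ decayRate b r β x := by
  unfold decayRate; positivity

theorem decayRate_le_self (hb : 0 ≤ b) (hr : 0 ≤ r) (hβ : 0 ≤ β) {x : ℝ} (hx : 0 ≤ x) :
    decayRate b r β x ≤ x := by
  rcases (by positivity : 0 ≤ (b + r) * x + r * β).eq_or_lt with hD | hD
  · simp [decayRate, ← hD, hx]
  · rw [decayRate, div_le_iff₀ hD]
    nlinarith [mul_nonneg hr (sq_nonneg x), mul_nonneg (mul_nonneg hr hβ) hx]

theorem decayRate_sub_decayRate {x y : ℝ} (hx : (b + r) * x + r * β ≠ 0)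
    (hy : (b + r) * y + r * β ≠ 0) :
    decayRate b r β y - decayRate b r β x = b * (y - x) * ((b + r) * x * y + r * β * (x + y)) /
      (((b + r) * x + r * β) * ((b + r) * y + r * β)) := by
  rw [decayRate, decayRate, div_sub_div _ _ hy hx]
  ring

theorem decayRate_sub_decayRate_mem_Icc (hb : 0 ≤ b) (hr : 0 ≤ r) (hβ : 0 ≤ β) {x y : ℝ}
    (hx : 0 ≤ x) (hxy : x ≤ y) : decayRate b r β y - decayRate b r β x ∈ Icc 0 (y - x) := by
  rcases hx.eq_or_lt with rfl | hx
  · simpa using ⟨decayRate_nonneg hb hr hβ hxy, decayRate_le_self hb hr hβ hxy⟩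
  rcases hb.eq_or_lt with rfl | hb
  · simpa [decayRate] using hxy
  have hy : 0 < y := hx.trans_le hxy
  have hDx : 0 < (b + r) * x + r * β := by positivity
  have hDy : 0 < (b + r) * y + r * β := by positivity
  have hN : 0 ≤ (b + r) * x * y + r * β * (x + y) := by positivity
  rw [decayRate_sub_decayRate hDx.ne' hDy.ne']
  refine ⟨by positivity, ?_⟩
  rw [div_le_iff₀ (mul_pos hDx hDy)]
  nlinarith [mul_nonneg (sub_nonneg.2 hxy)
    (add_nonneg (mul_nonneg hr hN) (mul_nonneg (mul_nonneg hr hr) (sq_nonneg β)))]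

theorem decayRate_monotoneOn (hb : 0 ≤ b) (hr : 0 ≤ r) (hβ : 0 ≤ β) :
    MonotoneOn (decayRate b r β) (Ici 0) := fun _ hx _ _ hxy =>
  sub_nonneg.1 (decayRate_sub_decayRate_mem_Icc hb hr hβ hx hxy).1

theorem monotoneOn_sub_decayRate (hb : 0 ≤ b) (hr : 0 ≤ r) (hβ : 0 ≤ β) :
    MonotoneOn (fun x => x - decayRate b r β x) (Ici 0) := fun x hx y _ hxy => by
  have := (decayRate_sub_decayRate_mem_Icc hb hr hβ hx hxy).2
  dsimp only
  linarith

end decayRate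

theorem mul_exp_le_of_hasDerivAt_neg_comp {g α : ℝ → ℝ} (hg : ∀ x, 0 < x → g x ≤ x)
    (hα : ∀ t, HasDerivAt α (-g (α t)) t) (hα0 : 0 < α 0) {t : ℝ} (ht : 0 ≤ t) :
    α 0 * exp (-2 * t) ≤ α t := by
  set f : ℝ → ℝ := fun s => α 0 * exp (-2 * s)
  have hf : ∀ s, HasDerivAt f (-2 * f s) s := fun s => by
    refine (((hasDerivAt_id s).const_mul (-2)).exp.const_mul (α 0)).congr_deriv ?_
    simp only [f, id]; ring
  -- As `g (α s) ≤ α s`, wherever the barrier meets `α` its slope is strictly smaller.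
  refine image_le_of_deriv_right_lt_deriv_boundary
    (fun s _ => (hf s).continuousAt.continuousWithinAt) (fun s _ => (hf s).hasDerivWithinAt)
    (by simp [f]) hα (fun s _ hs => ?_) ⟨ht, le_rfl⟩
  have hfs : 0 < f s := mul_pos hα0 (exp_pos _)
  linarith [hg (α s) (hs ▸ hfs)]

theorem sub_mul_le_of_hasDerivAt_neg_comp {g α : ℝ → ℝ} (hg : ∀ x, 0 ≤ x → 0 ≤ g x)
    (hgm : MonotoneOn g (Ici 0)) (hα : ∀ t, HasDerivAt α (-g (α t)) t) {t τ : ℝ} (hτ : 0 ≤ τ)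
    (hαt : ∀ s, t ≤ s → 0 ≤ α s) : α t - τ * g (α t) ≤ α (t + τ) := by
  have hdiff : Differentiable ℝ α := fun s => (hα s).differentiableAt
  have hanti : AntitoneOn α (Ici t) :=
    antitoneOn_of_deriv_nonpos (convex_Ici t) hdiff.continuous.continuousOn
      hdiff.differentiableOn fun s hs => by
        rw [(hα s).deriv, neg_nonpos]
        exact hg _ (hαt s (interior_subset hs))
  have hslope : ∀ s ∈ interior (Ici t), -g (α t) ≤ deriv α s := fun s hs => by
    have hs : t ≤ s := interior_subset hs
    rw [(hα s).deriv, neg_le_neg_iff]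
    exact hgm (hαt s hs) (hαt t le_rfl) (hanti self_mem_Ici hs hs)
  have := (convex_Ici t).mul_sub_le_image_sub_of_le_deriv hdiff.continuous.continuousOn
    hdiff.differentiableOn hslope t self_mem_Ici (t + τ) (by simpa using hτ) (by simpa using hτ)
  linarith

theorem le_of_monotoneOn_of_map_le_succ {φ : ℝ → ℝ} {x y : ℕ → ℝ} (hφ : MonotoneOn φ (Ici 0))
    (hφ0 : MapsTo φ (Ici 0) (Ici 0)) (hx : ∀ n, x (n + 1) = φ (x n))
    (hy : ∀ n, φ (y n) ≤ y (n + 1)) (hx0 : 0 ≤ x 0) (h0 : x 0 ≤ y 0) (n : ℕ) : x n ≤ y n := by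
  have hxn : ∀ n, 0 ≤ x n := fun n => by
    induction n with
    | zero => exact hx0
    | succ n ih => exact hx n ▸ hφ0 ih
  induction n with
  | zero => exact h0
  | succ n ih => exact hx n ▸ (hφ (hxn n) ((hxn n).trans ih) ih).trans (hy n)

theorem discrete_vs_continuous_comparison (b r β a : ℝ)
    (hb : 1 ≤ b) (hr : 1 ≤ r) (hβ : 0 ≤ β) (ha : 0 < a)
    (aseq : ℕ → ℝ) (haseq0 : aseq 0 = a)
    (haseq : ∀ t : ℕ,
      aseq (t + 1) = aseq t - b * aseq t ^ 2 / ((b + r) * aseq t + r * β))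
    (α : ℝ → ℝ)
    (hα : ∀ t : ℝ, HasDerivAt α (-(b * α t ^ 2 / ((b + r) * α t + r * β))) t)
    (hα0 : α 0 = a) :
    ∀ t : ℕ, aseq t ≤ α t := by
  have hb0 : 0 ≤ b := by linarith
  have hr0 : 0 ≤ r := by linarith
  have hα' : ∀ t, HasDerivAt α (-decayRate b r β (α t)) t := hα
  have hαpos : ∀ t : ℝ, 0 ≤ t → 0 < α t := fun t ht =>
    (mul_pos (hα0 ▸ ha) (exp_pos _)).trans_le <| mul_exp_le_of_hasDerivAt_neg_comp
      (fun _ hx => decayRate_le_self hb0 hr0 hβ hx.le) hα' (hα0 ▸ ha) ht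
  have hstep (n : ℕ) : α n - decayRate b r β (α n) ≤ α (n + 1 : ℕ) := by
    simpa using sub_mul_le_of_hasDerivAt_neg_comp (fun _ => decayRate_nonneg hb0 hr0 hβ)
      (decayRate_monotoneOn hb0 hr0 hβ) hα' zero_le_one
      fun s hs => (hαpos s ((Nat.cast_nonneg n).trans hs)).le
  exact le_of_monotoneOn_of_map_le_succ (y := fun n => α n) (monotoneOn_sub_decayRate hb0 hr0 hβ)
    (fun _ hx => sub_nonneg.2 (decayRate_le_self hb0 hr0 hβ hx)) haseq hstep (haseq0 ▸ ha.le)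
    (by simp [haseq0, hα0])
end

section
/- Two-cluster one-step bound: let Λ be the diagonal N×N psd matrix with r diagonal entries equal to α/r and N−r entries equal to β/(N−r), where α, β > 0. Then φ_{α+β}^(b)(Λ) is diagonal, its trailing N−r diagonal entries are at most β/(N−r), and its leading r diagonal entries are at most (1/r)[α − bα²/((b+r)α + rβ)]. -/
open Matrix

private lemma diag_iterate (N : ℕ) (c : ℝ) (b : ℕ) (d : Fin N → ℝ) :
    (fun X : Matrix (Fin N) (Fin N) ℝ => X - c • X ^ 2)^[b] (Matrix.diagonal d)
      = Matrix.diagonal (fun i => (fun x : ℝ => x - c * x ^ 2)^[b] (d i)) := by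
  induction b generalizing d with
  | zero => simp
  | succ n ih =>
      rw [Function.iterate_succ_apply]
      have h1 : (Matrix.diagonal d - c • (Matrix.diagonal d) ^ 2)
          = Matrix.diagonal (fun i => d i - c * d i ^ 2) := by
        rw [Matrix.diagonal_pow, ← Matrix.diagonal_smul, ← Matrix.diagonal_sub]
        congr 1
      rw [h1, ih]
      funext i
      simp [Function.iterate_succ_apply]

private lemma scalar_bounds (γ : ℝ) (hγ : 0 < γ) (b : ℕ) :
    ∀ x : ℝ, 0 < x → x < γ →
      0 < (fun x : ℝ => x - γ⁻¹ * x ^ 2)^[b] x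
      ∧ (fun x : ℝ => x - γ⁻¹ * x ^ 2)^[b] x < γ
      ∧ 1 / x + b / γ ≤ 1 / ((fun x : ℝ => x - γ⁻¹ * x ^ 2)^[b] x) := by
  induction b with
  | zero => intro x hx hxγ; refine ⟨hx, hxγ, by simp⟩
  | succ n ih =>
      intro x hx hxγ
      have hy0 : (0:ℝ) < x - γ⁻¹ * x ^ 2 := by
        have : γ⁻¹ * x ^ 2 < x := by
          rw [sq]
          calc γ⁻¹ * (x * x) < γ⁻¹ * (γ * x) := by
                apply mul_lt_mul_of_pos_left (mul_lt_mul_of_pos_right hxγ hx)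
                  (inv_pos.mpr hγ)
            _ = x := by field_simp
        linarith
      have hyγ : x - γ⁻¹ * x ^ 2 < γ := by
        have : 0 < γ⁻¹ * x ^ 2 := by positivity
        linarith
      obtain ⟨h1, h2, h3⟩ := ih (x - γ⁻¹ * x ^ 2) hy0 hyγ
      rw [Function.iterate_succ_apply]
      refine ⟨h1, h2, ?_⟩
      have key : 1 / x + 1 / γ ≤ 1 / (x - γ⁻¹ * x ^ 2) := by
        rw [div_add_div _ _ (ne_of_gt hx) (ne_of_gt hγ), div_le_div_iff₀ (by positivity) hy0]
        have ht0 : (0:ℝ) < γ⁻¹ := inv_pos.mpr hγ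
        have htγ : γ⁻¹ * γ = 1 := inv_mul_cancel₀ (ne_of_gt hγ)
        nlinarith [htγ, sq_nonneg x, mul_nonneg ht0.le (pow_nonneg hx.le 3),
          mul_nonneg (mul_nonneg ht0.le (sq_nonneg x)) hx.le]
      push_cast
      calc 1 / x + (n + 1) / γ = (1 / x + 1 / γ) + n / γ := by ring
        _ ≤ 1 / (x - γ⁻¹ * x ^ 2) + n / γ := by linarith
        _ ≤ _ := h3

theorem two_cluster_one_step_bound (N r : ℕ) (hr : 0 < r) (hrN : r < N)
    (a β : ℝ) (ha : 0 < a) (hβ : 0 < β) (b : ℕ) (hb : 1 ≤ b) :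
    (((fun X : Matrix (Fin N) (Fin N) ℝ => X - (a + β)⁻¹ • X ^ 2)^[b]
        (Matrix.diagonal fun i : Fin N =>
          if (i : ℕ) < r then a / r else β / (N - r))).IsDiag)
    ∧ (∀ i : Fin N, r ≤ (i : ℕ) →
        ((fun X : Matrix (Fin N) (Fin N) ℝ => X - (a + β)⁻¹ • X ^ 2)^[b]
          (Matrix.diagonal fun i : Fin N =>
            if (i : ℕ) < r then a / r else β / (N - r))) i i ≤ β / (N - r))
    ∧ (∀ i : Fin N, (i : ℕ) < r →
        ((fun X : Matrix (Fin N) (Fin N) ℝ => X - (a + β)⁻¹ • X ^ 2)^[b]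
          (Matrix.diagonal fun i : Fin N =>
            if (i : ℕ) < r then a / r else β / (N - r))) i i
          ≤ (1 / r) * (a - b * a ^ 2 / ((b + r) * a + r * β))) := by
  have hγ : (0:ℝ) < a + β := by linarith
  have hNr : (0:ℝ) < (N:ℝ) - r := by
    have : (r:ℝ) < N := by exact_mod_cast hrN
    linarith
  have hr' : (0:ℝ) < r := by exact_mod_cast hr
  rw [diag_iterate]
  refine ⟨Matrix.isDiag_diagonal _, ?_, ?_⟩
  · intro i hi
    rw [Matrix.diagonal_apply_eq]
    have hif : ¬ ((i:ℕ) < r) := not_lt.mpr hi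
    simp only [hif, if_false]
    set x := β / ((N:ℝ) - r) with hx
    have hx0 : 0 < x := div_pos hβ hNr
    have hxγ : x < a + β := by
      have h1 : x ≤ β := by
        rw [hx, div_le_iff₀ hNr]
        have : (1:ℝ) ≤ (N:ℝ) - r := by
          have : (r:ℝ) + 1 ≤ N := by exact_mod_cast hrN
          linarith
        nlinarith
      linarith
    -- iterate is ≤ x: each step decreases (subtracts a nonneg quantity)
    have mono : ∀ m, (fun x : ℝ => x - (a+β)⁻¹ * x ^ 2)^[m] x ≤ x := by
      intro m
      induction m with
      | zero => simp
      | succ n ih =>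
          obtain ⟨h1, h2, _⟩ := scalar_bounds (a+β) hγ n x hx0 hxγ
          rw [Function.iterate_succ_apply']
          have : 0 ≤ (a+β)⁻¹ * ((fun x : ℝ => x - (a+β)⁻¹ * x ^ 2)^[n] x) ^ 2 := by
            positivity
          linarith
    exact mono b
  · intro i hi
    rw [Matrix.diagonal_apply_eq]
    simp only [hi, if_true]
    set x := a / (r:ℝ) with hx
    have hx0 : 0 < x := div_pos ha hr'
    have hxγ : x < a + β := by
      have h1 : x ≤ a := by
        rw [hx, div_le_iff₀ hr']
        have : (1:ℝ) ≤ (r:ℝ) := by exact_mod_cast hr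
        nlinarith
      linarith
    obtain ⟨h1, h2, h3⟩ := scalar_bounds (a+β) hγ b x hx0 hxγ
    set y := (fun x : ℝ => x - (a+β)⁻¹ * x ^ 2)^[b] x with hy
    have hden : (0:ℝ) < 1 / x + b / (a + β) := by positivity
    have hyb : y ≤ 1 / (1 / x + b / (a + β)) := by
      rw [le_div_iff₀ hden]
      calc y * (1 / x + b / (a+β)) ≤ y * (1 / y) :=
            mul_le_mul_of_nonneg_left h3 (le_of_lt h1)
        _ = 1 := by field_simp
    have heq : 1 / (1 / x + (b:ℝ) / (a + β))
        = (1 / r) * (a - b * a ^ 2 / (((b:ℝ) + r) * a + r * β)) := by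
      have hd2 : ((b:ℝ) + r) * a + r * β ≠ 0 := by positivity
      rw [hx]
      field_simp
      ring
    rw [heq] at hyb
    exact hyb
end
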